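/- arXiv:2510.01726 — 2 statements merged into one kernel-verified Lean document; each statement's English description precedes it below -/
import Mathlib

section
/- Let Ω ⊂ ℝ^d be a compact set and let μ be a finite Borel measure on Ω. For every n ∈ ℕ there exist s ≤ C(n+d, d) points x(1), …, x(s) ∈ Ω and positive weights γ₁, …, γ_s > 0 such that ∫_Ω x^α dμ(x) = Σ_{j=1}^s γ_j · x(j)^α for every multi-index α ∈ ℕ^d with |α| ≤ n; equivalently, ∫_Ω p dμ = Σ_{j=1}^s γ_j p(x(j)) for every polynomial p ∈ ℝ[x₁,…,x_d] of total degree at most n. -/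
open MeasureTheory Module

/-!
The moment map `y ↦ (y ^ α)_{|α| ≤ n}` sends `Ω` onto a compact subset `V` of `ℝ^N`,
`N = C(n + d, d)`. In finite dimension the convex hull of a compact set is compact, hence closed,
so the normalised moment vector `⨍_Ω (y ^ α) dμ` lies in `conv V`. Carathéodory writes it as a
positive combination of affinely independent points of `V`; since these lie on the hyperplane
where the coordinate `α = 0` equals `1`, they are even linearly independent, so there are at
most `N` of them.
-/

theorem AffineIndependent.linearIndependent_of_map_eq_one {k V ι : Type*} [Ring k]
    [AddCommGroup V] [Module k V] {p : ι → V} (hp : AffineIndependent k p) (ℓ : V →ₗ[k] k)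
    (hℓ : ∀ i, ℓ (p i) = 1) : LinearIndependent k p :=
  linearIndependent_iff'.2 fun s w hw =>
    hp.eq_zero_of_sum_eq_zero (by simpa [hℓ] using congr(ℓ $hw)) hw

section Caratheodory

variable {𝕜 E : Type*} [Field 𝕜] [LinearOrder 𝕜] [IsStrictOrderedRing 𝕜] [AddCommGroup E]
  [Module 𝕜 E] [FiniteDimensional 𝕜 E]

theorem exists_pos_sum_smul_eq_of_mem_convexHull_of_map_eq_one
    {S : Set E} (ℓ : E →ₗ[𝕜] 𝕜) (hℓ : ∀ z ∈ S, ℓ z = 1) {x : E} (hx : x ∈ convexHull 𝕜 S) :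
    ∃ s ≤ finrank 𝕜 E, ∃ (z : Fin s → E) (w : Fin s → 𝕜),
      (∀ j, z j ∈ S) ∧ (∀ j, 0 < w j) ∧ ∑ j, w j • z j = x := by
  obtain ⟨ι, _, z, w, hzS, hz, hw, -, rfl⟩ := eq_pos_convex_span_of_mem_convexHull hx
  have hlin := hz.linearIndependent_of_map_eq_one ℓ fun i => hℓ _ (hzS ⟨i, rfl⟩)
  let e := (Fintype.equivFin ι).symm
  exact ⟨_, hlin.fintype_card_le_finrank, z ∘ e, w ∘ e, fun j => hzS ⟨_, rfl⟩, fun j => hw _,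
    e.sum_comp fun i => w i • z i⟩

theorem exists_mem_stdSimplex_sum_smul_eq_of_mem_convexHull
    {s : Set E} (hs : s.Nonempty) {x : E} (hx : x ∈ convexHull 𝕜 s) :
    ∃ (w : Fin (finrank 𝕜 E + 1) → 𝕜) (z : Fin (finrank 𝕜 E + 1) → E),
      w ∈ stdSimplex 𝕜 _ ∧ (∀ j, z j ∈ s) ∧ ∑ j, w j • z j = x := by
  obtain ⟨y₀, hy₀⟩ := hs
  obtain ⟨ι, _, z, w, hzs, hz, hw, hw₁, rfl⟩ := eq_pos_convex_span_of_mem_convexHull hx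
  obtain ⟨f⟩ : Nonempty (ι ↪ Fin (finrank 𝕜 E + 1)) := Function.Embedding.nonempty_of_card_le <|
    by simpa using hz.card_le_finrank_succ.trans (Nat.succ_le_succ (Submodule.finrank_le _))
  let w' := Function.extend f w 0
  let z' := Function.extend f z fun _ => y₀
  have hw' : ∀ i, w' (f i) = w i := f.injective.extend_apply w 0
  have hz' : ∀ i, z' (f i) = z i := f.injective.extend_apply z _
  have hw'₀ : ∀ j ∉ Set.range f, w' j = 0 := fun j hj => Function.extend_apply' _ _ _ hj
  refine ⟨w', z', ⟨fun j => ?_, ?_⟩, fun j => ?_, ?_⟩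
  · by_cases hj : j ∈ Set.range f
    · obtain ⟨i, rfl⟩ := hj
      exact hw' i ▸ (hw i).le
    · exact (hw'₀ j hj).ge
  · exact hw₁ ▸ (Fintype.sum_of_injective f f.injective w w' hw'₀ fun i => (hw' i).symm).symm
  · by_cases hj : j ∈ Set.range f
    · obtain ⟨i, rfl⟩ := hj
      exact hz' i ▸ hzs ⟨i, rfl⟩
    · simpa [z', Function.extend_apply' _ _ _ hj] using hy₀
  · refine (Fintype.sum_of_injective f f.injective _ _ (fun j hj => ?_) fun i => ?_).symm
    · simp [hw'₀ j hj]
    · simp [hw', hz']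

end Caratheodory

theorem IsCompact.convexHull {E : Type*} [NormedAddCommGroup E] [NormedSpace ℝ E]
    [FiniteDimensional ℝ E] {s : Set E} (hs : IsCompact s) : IsCompact (convexHull ℝ s) := by
  rcases s.eq_empty_or_nonempty with rfl | hne
  · simp
  have hcont : Continuous fun p : (Fin (finrank ℝ E + 1) → ℝ) × (Fin (finrank ℝ E + 1) → E) =>
      ∑ j, p.1 j • p.2 j := by fun_prop
  convert ((isCompact_stdSimplex ℝ _).prod (isCompact_univ_pi fun _ => hs)).image hcont
  ext x
  constructor
  · intro hx
    obtain ⟨w, z, hw, hz, rfl⟩ := exists_mem_stdSimplex_sum_smul_eq_of_mem_convexHull hne hx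
    exact ⟨(w, z), ⟨hw, fun j _ => hz j⟩, rfl⟩
  · rintro ⟨⟨w, z⟩, ⟨hw, hz⟩, rfl⟩
    exact (convex_convexHull ℝ s).sum_mem (fun j _ => hw.1 j) hw.2
      fun j _ => subset_convexHull ℝ s (hz j trivial)

section Cubature

variable {X E : Type*} [TopologicalSpace X] [T2Space X] [MeasurableSpace X]
  [OpensMeasurableSpace X] [NormedAddCommGroup E] [NormedSpace ℝ E] [FiniteDimensional ℝ E]
  {K : Set X} (μ : Measure X) [IsFiniteMeasure μ] {v : X → E}

theorem setAverage_mem_convexHull_image (hK : IsCompact K) (hv : ContinuousOn v K)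
    (hμK : μ K ≠ 0) : ⨍ y in K, v y ∂μ ∈ convexHull ℝ (v '' K) :=
  (convex_convexHull ℝ _).set_average_mem (hK.image_of_continuousOn hv).convexHull.isClosed hμK
    (measure_ne_top μ K)
    ((ae_restrict_mem hK.measurableSet).mono fun _ hy => subset_convexHull ℝ _ ⟨_, hy, rfl⟩)
    (hv.integrableOn_compact hK)

theorem exists_setIntegral_eq_sum_smul (hK : IsCompact K) (hv : ContinuousOn v K)
    (ℓ : E →ₗ[ℝ] ℝ) (hℓ : ∀ y ∈ K, ℓ (v y) = 1) :
    ∃ s ≤ finrank ℝ E, ∃ (x : Fin s → X) (γ : Fin s → ℝ),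
      (∀ j, x j ∈ K) ∧ (∀ j, 0 < γ j) ∧ ∫ y in K, v y ∂μ = ∑ j, γ j • v (x j) := by
  by_cases hμK : μ K = 0
  · exact ⟨0, Nat.zero_le _, Fin.elim0, Fin.elim0, Fin.rec0, Fin.rec0, by
      simp [Measure.restrict_eq_zero.2 hμK]⟩
  obtain ⟨s, hs, z, w, hzK, hw, hsum⟩ :=
    exists_pos_sum_smul_eq_of_mem_convexHull_of_map_eq_one ℓ
      (by rintro _ ⟨y, hy, rfl⟩; exact hℓ y hy) (setAverage_mem_convexHull_image μ hK hv hμK)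
  choose x hxK hxz using hzK
  refine ⟨s, hs, x, fun j => μ.real K * w j, hxK,
    fun j => mul_pos (ENNReal.toReal_pos hμK (measure_ne_top μ K)) (hw j), ?_⟩
  rw [← measure_smul_setAverage _ (measure_ne_top μ K), ← hsum, Finset.smul_sum]
  simp [hxz, mul_smul]

end Cubature

def sumLEEquivSumEq (d n : ℕ) :
    {α : Fin d → ℕ // ∑ i, α i ≤ n} ≃ {P : Fin (d + 1) → ℕ // ∑ i, P i = n} where
  toFun α := ⟨Fin.cons (n - ∑ i, α.1 i) α.1, by rw [Fin.sum_cons]; exact Nat.sub_add_cancel α.2⟩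
  invFun P := ⟨Fin.tail P.1, by
    have := P.2; rw [Fin.sum_univ_succ] at this; simp [Fin.tail]; omega⟩
  left_inv α := by simp
  right_inv P := by
    ext i
    refine Fin.cases ?_ (fun j => ?_) i
    · have := P.2; rw [Fin.sum_univ_succ] at this; simp [Fin.tail]; omega
    · simp [Fin.tail]

noncomputable instance (d n : ℕ) : Fintype {α : Fin d → ℕ // ∑ i, α i ≤ n} :=
  Fintype.ofEquiv _ ((Sym.equivNatSumOfFintype (Fin (d + 1)) n).trans (sumLEEquivSumEq d n).symm)

theorem card_sum_le_eq_choose (d n : ℕ) :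
    Fintype.card {α : Fin d → ℕ // ∑ i, α i ≤ n} = (n + d).choose d := by
  rw [Fintype.card_congr ((sumLEEquivSumEq d n).trans (Sym.equivNatSumOfFintype _ n).symm),
    Sym.card_sym_eq_choose, Fintype.card_fin, Nat.add_right_comm, Nat.add_sub_cancel,
    add_comm, Nat.choose_symm_add]

/-- Tchakaloff's theorem: for a compact `Ω ⊆ ℝ^d` and a finite Borel measure
`μ` on `Ω`, and any `n`, there exist `s ≤ C(n+d, d)` points of `Ω` and positive
weights matching all moments of `μ` up to degree `n`. -/
theorem tchakaloff_theorem
    {d : ℕ} (Ω : Set (EuclideanSpace ℝ (Fin d))) (hΩc : IsCompact Ω)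
    (μ : Measure (EuclideanSpace ℝ (Fin d))) [IsFiniteMeasure μ]
    (n : ℕ) :
    ∃ (s : ℕ), s ≤ (n + d).choose d ∧
      ∃ (x : Fin s → EuclideanSpace ℝ (Fin d)) (γ : Fin s → ℝ),
        (∀ j, x j ∈ Ω) ∧ (∀ j, 0 < γ j) ∧
        ∀ α : Fin d → ℕ, (∑ i, α i) ≤ n →
          ∫ y in Ω, (∏ i, y i ^ α i) ∂μ = ∑ j, γ j * ∏ i, (x j i) ^ α i := by
  let moments : EuclideanSpace ℝ (Fin d) → {α : Fin d → ℕ // ∑ i, α i ≤ n} → ℝ :=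
    fun y α => ∏ i, y i ^ α.1 i
  have hcont : Continuous moments := by fun_prop
  obtain ⟨s, hs, x, γ, hxΩ, hγ, hint⟩ := exists_setIntegral_eq_sum_smul μ hΩc hcont.continuousOn
    (LinearMap.proj ⟨0, by simp⟩) (by simp [moments])
  refine ⟨s, hs.trans_eq ?_, x, γ, hxΩ, hγ, fun α hα => ?_⟩
  · rw [finrank_fintype_fun_eq_card, card_sum_le_eq_choose]
  · have := congr_fun hint ⟨α, hα⟩
    rwa [eval_integral (fun a => (hcont.continuousOn.integrableOn_compact hΩc).eval a),
      Finset.sum_apply] at this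
end

section
/- Let (Ω, μ) be a measure space with μ a finite measure satisfying μ(Ω) > 0, and let f : Ω → ℝ be integrable with respect to μ. Then there exist points x₀, x₁ ∈ Ω and λ ∈ [0, 1] such that ∫_Ω f dμ = μ(Ω) · (λ · f(x₀) + (1 − λ) · f(x₁)). In other words, the μ-average (1/μ(Ω)) ∫_Ω f dμ is a convex combination of at most two values of f. -/
open MeasureTheory

/-! The average `⨍ f ∂μ` cannot lie strictly below or strictly above all values of `f`, so it is
squeezed between two of them and is a convex combination of those two; multiplying by
`μ(Ω)` turns the average back into the integral. -/

theorem exists_average_mem_segment {Ω : Type*} [MeasurableSpace Ω] {μ : Measure Ω}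
    [IsFiniteMeasure μ] (hμ : μ ≠ 0) {f : Ω → ℝ} (hf : Integrable f μ) :
    ∃ x₀ x₁ : Ω, ⨍ ω, f ω ∂μ ∈ segment ℝ (f x₀) (f x₁) := by
  obtain ⟨x₀, hx₀⟩ := exists_le_average hμ hf
  obtain ⟨x₁, hx₁⟩ := exists_average_le hμ hf
  exact ⟨x₀, x₁, Icc_subset_segment ⟨hx₀, hx₁⟩⟩

/-- Extension of the Mean Value Theorem (main result): for a finite measure `μ`
of positive total mass on an arbitrary measure space `Ω` and a `μ`-integrable
`f : Ω → ℝ`, there exist `x₀, x₁ ∈ Ω` and `λ ∈ [0,1]` with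
`∫ f dμ = μ(Ω) * (λ f(x₀) + (1-λ) f(x₁))`. -/
theorem extended_mean_value_theorem
    {Ω : Type*} [MeasurableSpace Ω] (μ : Measure Ω) [IsFiniteMeasure μ]
    (hμ : 0 < μ Set.univ) (f : Ω → ℝ) (hf : Integrable f μ) :
    ∃ (x₀ x₁ : Ω) (l : ℝ), l ∈ Set.Icc (0 : ℝ) 1 ∧
      ∫ ω, f ω ∂μ = (μ Set.univ).toReal * (l * f x₀ + (1 - l) * f x₁) := by
  obtain ⟨x₀, x₁, hmem⟩ := exists_average_mem_segment (Measure.measure_univ_pos.mp hμ) hf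
  rw [segment_symm, segment_eq_image] at hmem
  obtain ⟨l, hl, hl_avg⟩ := hmem
  refine ⟨x₀, x₁, l, hl, ?_⟩
  rw [← measure_smul_average, ← hl_avg, smul_eq_mul, Measure.real]
  simp only [smul_eq_mul]
  ring
end
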